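/- arXiv:1709.08840 — 5 statements merged into one kernel-verified Lean document; each statement's English description precedes it below -/
import Mathlib

section
/- Let A be a real n × n matrix all of whose complex eigenvalues have modulus strictly less than 1. Then det(I − A) > 0. -/
/-!
`det (1 - A)` is the value at `1` of the characteristic polynomial `χ_A`, a monic real
polynomial. Every real root of `χ_A` is a complex eigenvalue, hence lies in `(-1, 1)`. Since
`χ_A` tends to `+∞`, a nonpositive value at `1` would give, by the intermediate value theorem,
a root `≥ 1`.
-/

open Filter Polynomial

theorem Polynomial.Monic.eval_pos_of_forall_isRoot_lt {p : ℝ[X]} (hp : p.Monic) {a : ℝ}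
    (hroots : ∀ x, p.IsRoot x → x < a) : 0 < p.eval a := by
  have h_eventually_pos : ∀ᶠ x in atTop, 0 < p.eval x := by
    rcases le_or_gt p.degree 0 with hdeg | hdeg
    · simp [(degree_le_zero_iff_eq_one hp).mp hdeg]
    · exact (p.tendsto_atTop_of_leadingCoeff_nonneg hdeg
        (hp.leadingCoeff ▸ zero_le_one)).eventually_gt_atTop 0
  obtain ⟨b, hb, hab⟩ := (h_eventually_pos.and (eventually_ge_atTop a)).exists
  by_contra! ha
  obtain ⟨x, ⟨hax, -⟩, hx⟩ :=
    intermediate_value_Icc hab p.continuous.continuousOn ⟨ha, hb.le⟩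
  exact (hroots x hx).not_ge hax

theorem Matrix.det_one_sub_eq_eval_charpoly {n R : Type*} [Fintype n] [DecidableEq n]
    [CommRing R] (A : Matrix n n R) : (1 - A).det = A.charpoly.eval 1 := by
  rw [eval_charpoly, map_one]

/-- Let `A` be a real `n × n` matrix all of whose complex eigenvalues
(i.e. roots in `ℂ` of its characteristic polynomial) have modulus strictly less than `1`.
Then `det (I − A) > 0`. -/
theorem det_one_sub_pos_of_spectral_radius_lt_one
    {n : ℕ} (A : Matrix (Fin n) (Fin n) ℝ)
    (hA : ∀ μ : ℂ, (Matrix.charpoly (A.map (algebraMap ℝ ℂ))).IsRoot μ → ‖μ‖ < 1) :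
    0 < (1 - A).det := by
  rw [A.det_one_sub_eq_eval_charpoly]
  refine A.charpoly_monic.eval_pos_of_forall_isRoot_lt fun x hx => ?_
  have hx_complex : (A.map (algebraMap ℝ ℂ)).charpoly.IsRoot (x : ℂ) := by
    rw [A.charpoly_map]
    exact hx.map
  have hx_norm := hA x hx_complex
  rw [Complex.norm_real, Real.norm_eq_abs] at hx_norm
  exact (le_abs_self x).trans_lt hx_norm
end

section
/- Let x̄ ∈ ℝⁿ satisfy 0 < x̄_i < 1 for all i and G(x̄) = x̄. Then the Jacobian matrix of G at x̄ has entries ∂G_i/∂x_i(x̄) = x̄_i and, for every j ≠ i, ∂G_i/∂x_j(x̄) = −x̄_i x̄_j/(1 − x̄_j). -/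
/-! Differentiate along the coordinate line `t ↦ update x j t`. There each product
`∏_{l≠k} (1 - x_l)` with `k ≠ j` has derivative `-∏_{l≠k} (1 - x_l) / (1 - x_j)`, and the one
with `k = j` is constant, so `∂_j d = -(d - γ_j ∏_{l≠j} (1 - x_l)) / (1 - x_j)`. The quotient rule
then gives `(1 - x_j) ∂_j G_i = G_i (δ_ij - G_j)` wherever `d ≠ 0`, and at a fixed point `G = x̄`.
-/

/-- The denominator `d(x) = ∑ₖ γₖ ∏_{j≠k} (1 − xⱼ)` of the DeGroot–Friedkin map. -/
noncomputable def dDF {n : ℕ} (γ x : Fin n → ℝ) : ℝ :=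
  ∑ k, γ k * ∏ j ∈ Finset.univ.erase k, (1 - x j)

/-- The DeGroot–Friedkin self-appraisal map `G`, with
`Gᵢ(x) = γᵢ ∏_{j≠i} (1 − xⱼ) / d(x)`. -/
noncomputable def GDF {n : ℕ} (γ x : Fin n → ℝ) : Fin n → ℝ :=
  fun i => (γ i * ∏ j ∈ Finset.univ.erase i, (1 - x j)) / dDF γ x

open Finset Function

section
variable {ι : Type*} [DecidableEq ι]

theorem fderiv_apply_single_eq_of_hasDerivAt_update [Fintype ι] {f : (ι → ℝ) → ℝ}
    {x : ι → ℝ} {j : ι} {a : ℝ} (hf : DifferentiableAt ℝ f x)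
    (h : HasDerivAt (fun t => f (update x j t)) a (x j)) :
    fderiv ℝ f x (Pi.single j 1) = a := by
  have hf' : HasFDerivAt f (fderiv ℝ f x) (update x j (x j)) := by
    rw [update_eq_self]; exact hf.hasFDerivAt
  exact (hf'.comp_hasDerivAt (x j) (hasDerivAt_update x j (x j))).unique h

theorem hasDerivAt_prod_one_sub_update (s : Finset ι) (x : ι → ℝ) {j : ι} (hj : x j ≠ 1) :
    HasDerivAt (fun t => ∏ l ∈ s, (1 - update x j t l))
      (-(if j ∈ s then ∏ l ∈ s, (1 - x l) else 0) / (1 - x j)) (x j) := by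
  have hrest : ∀ t, ∀ l ∈ s.erase j, 1 - update x j t l = 1 - x l := fun t l hl => by
    rw [update_of_ne (ne_of_mem_erase hl)]
  split_ifs with hs
  · have hline : (fun t => ∏ l ∈ s, (1 - update x j t l))
        = fun t => (1 - t) * ∏ l ∈ s.erase j, (1 - x l) := funext fun t => by
      rw [← mul_prod_erase s _ hs, update_self, prod_congr rfl (hrest t)]
    rw [hline, ← mul_prod_erase s _ hs, neg_div, mul_div_cancel_left₀ _ (sub_ne_zero.2 hj.symm)]
    simpa using ((hasDerivAt_id (x j)).const_sub 1).mul_const (∏ l ∈ s.erase j, (1 - x l))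
  · have hline : (fun t => ∏ l ∈ s, (1 - update x j t l)) = fun _ => ∏ l ∈ s, (1 - x l) :=
      funext fun t => by rw [← erase_eq_of_notMem hs, prod_congr rfl (hrest t)]
    rw [hline, neg_zero, zero_div]
    exact hasDerivAt_const _ _

end

section
variable {n : ℕ} (γ x : Fin n → ℝ)

-- `GDF` divides by `dDF`, and division by zero gives `0`.
theorem dDF_ne_zero_of_GDF_apply_ne_zero {i : Fin n} (h : GDF γ x i ≠ 0) : dDF γ x ≠ 0 :=
  fun hd => h (by rw [GDF, hd, div_zero])

theorem differentiableAt_GDF_apply (hd : dDF γ x ≠ 0) (i : Fin n) :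
    DifferentiableAt ℝ (fun y => GDF γ y i) x := by
  unfold GDF dDF
  fun_prop (disch := assumption)

theorem hasDerivAt_dDF_update {j : Fin n} (hj : x j ≠ 1) :
    HasDerivAt (fun t => dDF γ (update x j t))
      (-(dDF γ x - γ j * ∏ l ∈ univ.erase j, (1 - x l)) / (1 - x j)) (x j) := by
  have hterms := HasDerivAt.fun_sum (u := univ) fun k _ =>
    (hasDerivAt_prod_one_sub_update (univ.erase k) x hj).const_mul (γ k)
  refine hterms.congr_deriv ?_
  simp only [mem_erase, mem_univ, and_true, mul_div_assoc', mul_neg, mul_ite, mul_zero,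
    ← sum_div, sum_neg_distrib, ← sum_filter, filter_ne, sum_erase_eq_sub (mem_univ j)]
  rfl

theorem hasDerivAt_GDF_update (hd : dDF γ x ≠ 0) {j : Fin n} (hj : x j ≠ 1) (i : Fin n) :
    HasDerivAt (fun t => GDF γ (update x j t) i)
      (GDF γ x i * ((if j = i then 1 else 0) - GDF γ x j) / (1 - x j)) (x j) := by
  have h := ((hasDerivAt_prod_one_sub_update (univ.erase i) x hj).const_mul (γ i)).fun_div
    (hasDerivAt_dDF_update γ x hj) (by rwa [update_eq_self])
  refine h.congr_deriv ?_
  have hj' : 1 - x j ≠ 0 := sub_ne_zero.2 hj.symm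
  simp only [update_eq_self, mem_erase, mem_univ, and_true, GDF]
  rcases eq_or_ne j i with rfl | hji
  · simp only [ne_eq, not_true_eq_false, if_false, if_true, neg_zero, zero_div, mul_zero]
    field_simp
    ring
  · simp only [hji, ne_eq, not_false_eq_true, if_true, if_false]
    field_simp
    ring

theorem fderiv_GDF_apply_single (hd : dDF γ x ≠ 0) {j : Fin n} (hj : x j ≠ 1) (i : Fin n) :
    fderiv ℝ (fun y => GDF γ y i) x (Pi.single j 1)
      = GDF γ x i * ((if j = i then 1 else 0) - GDF γ x j) / (1 - x j) :=
  fderiv_apply_single_eq_of_hasDerivAt_update (differentiableAt_GDF_apply γ x hd i)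
    (hasDerivAt_GDF_update γ x hd hj i)

end

theorem GDF_jacobian_at_interior_fixed_point_general
    {n : ℕ} (γ : Fin n → ℝ)
    (xbar : Fin n → ℝ) (hx0 : ∀ i, 0 < xbar i) (hx1 : ∀ i, xbar i < 1)
    (hfix : GDF γ xbar = xbar) :
    (∀ i : Fin n,
      fderiv ℝ (fun y => GDF γ y i) xbar (Pi.single i 1) = xbar i) ∧
    (∀ i j : Fin n, j ≠ i →
      fderiv ℝ (fun y => GDF γ y i) xbar (Pi.single j 1) =
        -(xbar i * xbar j / (1 - xbar j))) := by
  have hjacobian (i j : Fin n) : fderiv ℝ (fun y => GDF γ y i) xbar (Pi.single j 1)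
      = xbar i * ((if j = i then 1 else 0) - xbar j) / (1 - xbar j) := by
    have hGi : GDF γ xbar i ≠ 0 := by rw [hfix]; exact (hx0 i).ne'
    have hd : dDF γ xbar ≠ 0 := dDF_ne_zero_of_GDF_apply_ne_zero γ xbar hGi
    rw [fderiv_GDF_apply_single γ xbar hd (hx1 j).ne, hfix]
  refine ⟨fun i => ?_, fun i j hji => ?_⟩
  · rw [hjacobian, if_pos rfl, mul_div_assoc, div_self (sub_ne_zero.2 (hx1 i).ne'), mul_one]
  · rw [hjacobian, if_neg hji]
    ring

/-- Let `x̄ ∈ ℝⁿ` satisfy `0 < x̄ᵢ < 1` for all `i` and `G(x̄) = x̄`.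
Then the Jacobian of `G` at `x̄` has entries `∂Gᵢ/∂xᵢ(x̄) = x̄ᵢ` and, for `j ≠ i`,
`∂Gᵢ/∂xⱼ(x̄) = −x̄ᵢ x̄ⱼ/(1 − x̄ⱼ)`. -/
theorem GDF_jacobian_at_interior_fixed_point
    {n : ℕ} (hn : 3 ≤ n) (γ : Fin n → ℝ)
    (hγpos : ∀ i, 0 < γ i) (hγsum : ∑ i, γ i = 1)
    (xbar : Fin n → ℝ) (hx0 : ∀ i, 0 < xbar i) (hx1 : ∀ i, xbar i < 1)
    (hfix : GDF γ xbar = xbar) :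
    (∀ i : Fin n,
      fderiv ℝ (fun y => GDF γ y i) xbar (Pi.single i 1) = xbar i) ∧
    (∀ i j : Fin n, j ≠ i →
      fderiv ℝ (fun y => GDF γ y i) xbar (Pi.single j 1) =
        -(xbar i * xbar j / (1 - xbar j))) :=
  GDF_jacobian_at_interior_fixed_point_general γ xbar hx0 hx1 hfix
end

section
/- Let n ≥ 3 and let x̄ ∈ ℝⁿ satisfy x̄_i > 0 for all i and ∑_{i=1}^n x̄_i = 1. Define the n × n real matrix M by M_{ii} = x̄_i and M_{ij} = −x̄_i x̄_j/(1 − x̄_j) for j ≠ i. Then all complex eigenvalues of M are real, trace(M) = 1, the eigenvalue 0 of M has algebraic multiplicity exactly one, and every nonzero eigenvalue of M lies in the open interval (0, 1). -/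
/-!
Put `q i = √(1 - x̄ i)`. Conjugating `M` by `diagonal q` gives the symmetric matrix
`S = diagonal c - w wᵀ` with `c i = x̄ i / q i ^ 2` and `w i = x̄ i / q i`. As
`∑ w i ^ 2 / c i = ∑ x̄ i = 1`, Cauchy–Schwarz makes `S` positive semidefinite with kernel
spanned by `w / c`. So the eigenvalues of `M` are those of `S`: real, nonnegative, exactly one
of them zero, and summing to `trace M = 1`; since `n ≥ 3`, at least two are positive, so each
one is `< 1`.
-/

open Polynomial Matrix
open scoped ComplexOrder

variable {ι : Type*} [Fintype ι]

theorem lt_one_of_sum_eq_one {x : ι → ℝ} (hx : ∀ i, 0 < x i) (hsum : ∑ i, x i = 1)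
    (hcard : 1 < Fintype.card ι) (i : ι) : x i < 1 := by
  obtain ⟨j, hji⟩ := Fintype.exists_ne_of_one_lt_card hcard i
  rw [← hsum]
  exact Finset.single_lt_sum hji (Finset.mem_univ i) (Finset.mem_univ j) (hx j)
    fun k _ _ => (hx k).le

variable [DecidableEq ι]

namespace Matrix

theorem charpoly_eq_of_mul_eq_mul {R : Type*} [CommRing R] {A B T : Matrix ι ι R}
    (hT : IsUnit T) (h : A * T = T * B) : A.charpoly = B.charpoly := by
  obtain ⟨U, rfl⟩ := hT
  have hA : A = U * B * U⁻¹ := by rw [← h, Units.mul_inv_cancel_right]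
  rw [hA, charpoly_mul_comm, ← mul_assoc, Units.inv_mul, one_mul]

theorem trace_eq_of_charpoly_eq [Nonempty ι] {R : Type*} [CommRing R] {A B : Matrix ι ι R}
    (h : A.charpoly = B.charpoly) : A.trace = B.trace := by
  rw [trace_eq_neg_charpoly_coeff, trace_eq_neg_charpoly_coeff, h]

theorem diagonal_sub_vecMulVec_mulVec {R : Type*} [CommRing R] (c w u : ι → R) :
    (diagonal c - vecMulVec w w) *ᵥ u = c * u - (w ⬝ᵥ u) • w := by
  ext i
  simp [sub_mulVec, vecMulVec_mulVec, mulVec_diagonal, mul_comm]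

theorem posSemidef_diagonal_sub_vecMulVec {c w : ι → ℝ} (hc : ∀ i, 0 < c i)
    (hw : ∑ i, w i ^ 2 / c i ≤ 1) : (diagonal c - vecMulVec w w).PosSemidef := by
  refine posSemidef_iff_dotProduct_mulVec.2 ⟨?_, fun u => ?_⟩
  · simpa using (isHermitian_diagonal c).sub (posSemidef_vecMulVec_self_star w).1
  have hCS : (w ⬝ᵥ u) ^ 2 ≤ (∑ i, w i ^ 2 / c i) * ∑ i, c i * u i ^ 2 :=
    Finset.sum_sq_le_sum_mul_sum_of_sq_le_mul _ (fun i _ => div_nonneg (sq_nonneg _) (hc i).le)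
      (fun i _ => mul_nonneg (hc i).le (sq_nonneg _))
      (fun i _ => le_of_eq (by field_simp [(hc i).ne']))
  have hc_sum : 0 ≤ ∑ i, c i * u i ^ 2 :=
    Finset.sum_nonneg fun i _ => mul_nonneg (hc i).le (sq_nonneg _)
  have hquad : u ⬝ᵥ (c * u) = ∑ i, c i * u i ^ 2 :=
    Finset.sum_congr rfl fun i _ => by simp only [Pi.mul_apply]; ring
  rw [diagonal_sub_vecMulVec_mulVec, star_trivial, dotProduct_sub, dotProduct_smul, smul_eq_mul,
    hquad, dotProduct_comm u w]
  linarith [mul_le_mul_of_nonneg_right hw hc_sum]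

theorem ker_mulVecLin_diagonal_sub_vecMulVec {K : Type*} [Field K] {c w : ι → K}
    (hc : ∀ i, c i ≠ 0) (hw : ∑ i, w i ^ 2 / c i = 1) :
    LinearMap.ker (diagonal c - vecMulVec w w).mulVecLin = K ∙ (w / c) := by
  apply le_antisymm
  · intro u hu
    rw [LinearMap.mem_ker, mulVecLin_apply, diagonal_sub_vecMulVec_mulVec, sub_eq_zero] at hu
    refine Submodule.mem_span_singleton.2 ⟨w ⬝ᵥ u, funext fun i => ?_⟩
    have hi := congrFun hu i
    simp only [Pi.mul_apply, Pi.smul_apply, smul_eq_mul, Pi.div_apply] at hi ⊢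
    field_simp [hc i]
    linear_combination -hi
  · have hwc : w ⬝ᵥ (w / c) = 1 := by
      rw [← hw]; exact Finset.sum_congr rfl fun i _ => by simp only [Pi.div_apply]; ring
    rw [Submodule.span_singleton_le_iff_mem, LinearMap.mem_ker, mulVecLin_apply,
      diagonal_sub_vecMulVec_mulVec, hwc, one_smul, sub_eq_zero]
    ext i
    simp [mul_div_cancel₀ _ (hc i)]

theorem rank_diagonal_sub_vecMulVec {K : Type*} [Field K] {c w : ι → K}
    (hc : ∀ i, c i ≠ 0) (hw : ∑ i, w i ^ 2 / c i = 1) :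
    (diagonal c - vecMulVec w w).rank = Fintype.card ι - 1 := by
  have hwc : w / c ≠ 0 := by
    intro h
    have hw0 : w = 0 := funext fun i => by simpa [hc i] using congrFun h i
    simp [hw0] at hw
  have := LinearMap.finrank_range_add_finrank_ker (diagonal c - vecMulVec w w).mulVecLin
  rw [ker_mulVecLin_diagonal_sub_vecMulVec hc hw, finrank_span_singleton hwc,
    Module.finrank_fintype_fun_eq_card] at this
  rw [Matrix.rank]
  omega

theorem IsHermitian.roots_charpoly_map_complex_of_charpoly_eq {A S : Matrix ι ι ℝ}
    (hS : S.IsHermitian) (h : A.charpoly = S.charpoly) :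
    (A.map (algebraMap ℝ ℂ)).charpoly.roots =
      Finset.univ.val.map fun i => (hS.eigenvalues i : ℂ) := by
  rw [charpoly_map, h, hS.charpoly_eq, Polynomial.map_prod, roots_prod]
  · simp
  · simp [Finset.prod_ne_zero_iff, X_sub_C_ne_zero]

theorem IsHermitian.exists_eigenvalues_eq_of_isRoot_charpoly_map_complex {A S : Matrix ι ι ℝ}
    (hS : S.IsHermitian) (h : A.charpoly = S.charpoly) {μ : ℂ}
    (hμ : (A.map (algebraMap ℝ ℂ)).charpoly.IsRoot μ) : ∃ i, (hS.eigenvalues i : ℂ) = μ := by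
  have hmem := mem_roots'.2 ⟨(charpoly_monic _).ne_zero, hμ⟩
  rw [hS.roots_charpoly_map_complex_of_charpoly_eq h] at hmem
  obtain ⟨i, -, hi⟩ := Multiset.mem_map.1 hmem
  exact ⟨i, hi⟩

theorem IsHermitian.rootMultiplicity_zero_charpoly_map_complex_of_charpoly_eq
    {A S : Matrix ι ι ℝ} (hS : S.IsHermitian) (h : A.charpoly = S.charpoly) :
    (A.map (algebraMap ℝ ℂ)).charpoly.rootMultiplicity 0 = Fintype.card ι - S.rank := by
  rw [← count_roots, hS.roots_charpoly_map_complex_of_charpoly_eq h, Multiset.count_map,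
    hS.rank_eq_card_non_zero_eigs, Fintype.card_subtype_compl,
    Nat.sub_sub_self (Fintype.card_subtype_le _), Fintype.card_subtype]
  simp [Finset.card_def, Finset.filter_val, eq_comm (a := (0 : ℂ))]

theorem PosSemidef.eigenvalues_lt_one {𝕜 : Type*} [RCLike 𝕜] {S : Matrix ι ι 𝕜}
    (hS : S.PosSemidef) (htr : S.trace = 1) (hrank : 2 ≤ S.rank) (i : ι) :
    hS.1.eigenvalues i < 1 := by
  have hsum : ∑ j, hS.1.eigenvalues j = 1 := by
    have := hS.1.trace_eq_sum_eigenvalues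
    rw [htr] at this
    exact_mod_cast this.symm
  obtain ⟨j, hj, hji⟩ : ∃ j ∈ Finset.univ.filter (hS.1.eigenvalues · ≠ 0), j ≠ i := by
    refine Finset.exists_mem_ne ?_ i
    rw [← Fintype.card_subtype, ← hS.1.rank_eq_card_non_zero_eigs]
    omega
  have hj_pos : 0 < hS.1.eigenvalues j :=
    (hS.eigenvalues_nonneg j).lt_of_ne (Finset.mem_filter.1 hj).2.symm
  rw [← hsum]
  exact Finset.single_lt_sum hji (Finset.mem_univ i) (Finset.mem_univ j) hj_pos
    fun k _ _ => hS.eigenvalues_nonneg k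

end Matrix

theorem jacobian_mul_diagonal_eq {x q : ι → ℝ} (hq : ∀ i, q i ^ 2 = 1 - x i)
    (hq0 : ∀ i, q i ≠ 0) {M : Matrix ι ι ℝ}
    (hM : ∀ i j, M i j = if i = j then x i else -(x i * x j / (1 - x j))) :
    M * diagonal q = diagonal q * (diagonal (x / q ^ 2) - vecMulVec (x / q) (x / q)) := by
  ext i j
  rw [mul_diagonal, diagonal_mul, hM, Matrix.sub_apply, diagonal_apply, vecMulVec_apply]
  simp only [Pi.div_apply, Pi.pow_apply]
  split_ifs with hij
  · subst hij
    field_simp [hq0 i]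
    linear_combination x i * hq i
  · rw [← hq j]
    field_simp [hq0 i, hq0 j]
    ring

/-- Let `n ≥ 3` and let `x̄ ∈ ℝⁿ` satisfy `x̄ᵢ > 0` for all `i` and
`∑ x̄ᵢ = 1`. Define `M` by `Mᵢᵢ = x̄ᵢ` and `Mᵢⱼ = −x̄ᵢ x̄ⱼ/(1 − x̄ⱼ)` for `j ≠ i`. Then
all complex eigenvalues of `M` are real, `trace(M) = 1`, the eigenvalue `0` has algebraic
multiplicity exactly one, and every nonzero eigenvalue of `M` lies in `(0, 1)`. -/
theorem jacobian_at_fixed_point_eigenvalues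
    {n : ℕ} (hn : 3 ≤ n) (xbar : Fin n → ℝ)
    (hx0 : ∀ i, 0 < xbar i) (hxsum : ∑ i, xbar i = 1)
    (M : Matrix (Fin n) (Fin n) ℝ)
    (hM : ∀ i j, M i j = if i = j then xbar i else -(xbar i * xbar j / (1 - xbar j))) :
    (∀ μ : ℂ, (Matrix.charpoly (M.map (algebraMap ℝ ℂ))).IsRoot μ → μ.im = 0) ∧
    M.trace = 1 ∧
    (Matrix.charpoly (M.map (algebraMap ℝ ℂ))).rootMultiplicity 0 = 1 ∧
    (∀ μ : ℂ, (Matrix.charpoly (M.map (algebraMap ℝ ℂ))).IsRoot μ → μ ≠ 0 →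
      μ.im = 0 ∧ 0 < μ.re ∧ μ.re < 1) := by
  have : Nonempty (Fin n) := ⟨⟨0, by omega⟩⟩
  have hx1 : ∀ i, 0 < 1 - xbar i := fun i =>
    sub_pos.2 (lt_one_of_sum_eq_one hx0 hxsum (by rw [Fintype.card_fin]; omega) i)
  set q : Fin n → ℝ := fun i => √(1 - xbar i)
  have hq0 : ∀ i, 0 < q i := fun i => Real.sqrt_pos.2 (hx1 i)
  have hc : ∀ i, 0 < (xbar / q ^ 2) i := fun i => div_pos (hx0 i) (pow_pos (hq0 i) 2)
  have hw : ∑ i, (xbar / q) i ^ 2 / (xbar / q ^ 2) i = 1 := by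
    rw [← hxsum]
    refine Finset.sum_congr rfl fun i _ => ?_
    simp only [Pi.div_apply, Pi.pow_apply]
    field_simp [(hx0 i).ne', (hq0 i).ne']
  have hMS := charpoly_eq_of_mul_eq_mul
    (isUnit_diagonal.2 (Pi.isUnit_iff.2 fun i => (hq0 i).ne'.isUnit))
    (jacobian_mul_diagonal_eq (fun i => Real.sq_sqrt (hx1 i).le) (fun i => (hq0 i).ne') hM)
  have hS := posSemidef_diagonal_sub_vecMulVec hc hw.le
  have hrank := rank_diagonal_sub_vecMulVec (fun i => (hc i).ne') hw
  rw [Fintype.card_fin] at hrank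
  have hMtr : M.trace = 1 := by simp [trace, hM, hxsum]
  refine ⟨fun μ hμ => ?_, hMtr, ?_, fun μ hμ hμ0 => ?_⟩
  · obtain ⟨i, rfl⟩ := hS.1.exists_eigenvalues_eq_of_isRoot_charpoly_map_complex hMS hμ
    exact Complex.ofReal_im _
  · rw [hS.1.rootMultiplicity_zero_charpoly_map_complex_of_charpoly_eq hMS, hrank, Fintype.card_fin]
    omega
  · obtain ⟨i, rfl⟩ := hS.1.exists_eigenvalues_eq_of_isRoot_charpoly_map_complex hMS hμ
    have hlt := hS.eigenvalues_lt_one (hMtr ▸ (trace_eq_of_charpoly_eq hMS).symm) (by omega) i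
    have hpos := (hS.eigenvalues_nonneg i).lt_of_ne fun h => hμ0 (by simp [← h])
    exact ⟨Complex.ofReal_im _, hpos, hlt⟩
end

section
/- Suppose in addition that γ_i < 1/2 for every i. Then G has exactly one fixed point in Δ_n that is not a vertex: there exists a unique x̄ ∈ Δ_n with x̄ ∉ {e_1, …, e_n} and G(x̄) = x̄. -/
/-- The unit simplex `Δₙ = {x ∈ ℝⁿ : xᵢ ≥ 0, ∑ xᵢ = 1}`. -/
def simplexDF (n : ℕ) : Set (Fin n → ℝ) :=
  {x | (∀ i, 0 ≤ x i) ∧ ∑ i, x i = 1}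

/-!
At a fixed point `x` off the vertices every coordinate lies in `(0, 1)`, and multiplying
`Gᵢ(x) = xᵢ` by `1 - xᵢ` shows `xᵢ (1 - xᵢ) = c γᵢ` for one `c > 0`; conversely these
equations on the simplex give a fixed point. Let `γ_m` be maximal. As `n ≥ 3`, any two
coordinates sum to less than `1`, which forces `xᵢ ≤ 1/2` for `i ≠ m`: then `xᵢ` is the small
root of `xᵢ (1 - xᵢ) = (γᵢ / γ_m) t (1 - t)` with `t = x_m`. So fixed points correspond to the
roots in `(0, 1)` of `Φ(t) = t + ∑_{i ≠ m} xᵢ(t) = 1`. With `rᵢ = γᵢ / γ_m ≤ 1`,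
`xᵢ(t) = (1 - √((1 - rᵢ) + rᵢ (2t - 1)²)) / 2` is concave in `t` (the square root is the norm
of an affine map `ℝ → ℂ`), hence so is `Φ`; and `Φ(0) = 0`, `Φ(1) = 1`, while `γ_m < 1/2`
makes `Φ` exceed `1` somewhere in `(0, 1)`. A concave function with these values takes the
value `1` exactly once in `(0, 1)`.
-/

open Set

theorem ConcaveOn.sum {𝕜 E β ι : Type*} [Semiring 𝕜] [PartialOrder 𝕜] [AddCommMonoid E]
    [AddCommMonoid β] [PartialOrder β] [IsOrderedAddMonoid β] [SMul 𝕜 E] [Module 𝕜 β]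
    {s : Set E} {t : Finset ι} {f : ι → E → β} (hs : Convex 𝕜 s)
    (hf : ∀ i ∈ t, ConcaveOn 𝕜 s (f i)) : ConcaveOn 𝕜 s fun x => ∑ i ∈ t, f i x := by
  classical
  induction t using Finset.induction_on with
  | empty => simpa using concaveOn_const 0 hs
  | insert i t hi ih =>
    simp_rw [Finset.sum_insert hi]
    exact (hf i (Finset.mem_insert_self i t)).add
      (ih fun j hj => hf j (Finset.mem_insert_of_mem hj))

theorem ConcaveOn.existsUnique_mem_Ioo_eq {Φ : ℝ → ℝ} {a b c v : ℝ}
    (hΦ : ConcaveOn ℝ (Icc a b) Φ) (hcont : ContinuousOn Φ (Icc a b))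
    (ha : Φ a < v) (hb : Φ b = v) (hc : c ∈ Ioo a b) (hvc : v < Φ c) :
    ∃! t, t ∈ Ioo a b ∧ Φ t = v := by
  have below : ∀ {y z}, y ∈ Icc a b → z ∈ openSegment ℝ c y → Φ z = v → Φ y < v :=
    fun hy hz hzv => hzv ▸ hΦ.lt_right_of_left_lt (Ioo_subset_Icc_self hc) hy hz (hzv ▸ hvc)
  have not_two_roots :
      ∀ {t t'}, t ∈ Ioo a b ∧ Φ t = v → t' ∈ Ioo a b ∧ Φ t' = v → ¬t < t' := by
    rintro t t' ⟨ht, hΦt⟩ ⟨ht', hΦt'⟩ htt'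
    rcases lt_trichotomy t' c with h | rfl | h
    · refine (below (Ioo_subset_Icc_self ht) ?_ hΦt').ne hΦt
      rw [openSegment_symm, openSegment_eq_Ioo (htt'.trans h)]
      exact ⟨htt', h⟩
    · exact hvc.ne' hΦt'
    · refine (below (right_mem_Icc.2 (hc.1.trans hc.2).le) ?_ hΦt').ne hb
      rw [openSegment_eq_Ioo (h.trans ht'.2)]
      exact ⟨h, ht'.2⟩
  obtain ⟨t, ht, hΦt⟩ :=
    intermediate_value_Ioo hc.1.le (hcont.mono (Icc_subset_Icc_right hc.2.le)) ⟨ha, hvc⟩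
  have hroot : t ∈ Ioo a b ∧ Φ t = v := ⟨⟨ht.1, ht.2.trans hc.2⟩, hΦt⟩
  exact ⟨t, hroot, fun t' ht' =>
    le_antisymm (not_lt.1 (not_two_roots hroot ht')) (not_lt.1 (not_two_roots ht' hroot))⟩

lemma convexOn_sqrt_add_mul_sq {c k : ℝ} (hc : 0 ≤ c) (hk : 0 ≤ k) :
    ConvexOn ℝ univ fun u : ℝ => √(c + k * u ^ 2) := by
  have hnorm : (fun u : ℝ => √(c + k * u ^ 2)) =
      norm ∘ AffineMap.lineMap (√c : ℂ) (√c + √k * Complex.I) := by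
    funext u
    have : AffineMap.lineMap (√c : ℂ) (√c + √k * Complex.I) u =
        (√c : ℝ) + (√k * u : ℝ) * Complex.I := by
      rw [AffineMap.lineMap_apply_module', Complex.real_smul]
      push_cast
      ring
    rw [Function.comp_apply, this, Complex.norm_add_mul_I, mul_pow, Real.sq_sqrt hc,
      Real.sq_sqrt hk]
  rw [hnorm]
  exact (convexOn_norm convex_univ).comp_affineMap _

noncomputable def smallRoot (a : ℝ) : ℝ := (1 - √(1 - 4 * a)) / 2

lemma smallRoot_zero : smallRoot 0 = 0 := by simp [smallRoot]

lemma smallRoot_le_half (a : ℝ) : smallRoot a ≤ 1 / 2 := by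
  unfold smallRoot
  linarith [Real.sqrt_nonneg (1 - 4 * a)]

lemma smallRoot_mul_one_sub {a : ℝ} (ha : a ≤ 1 / 4) : smallRoot a * (1 - smallRoot a) = a := by
  have := Real.sq_sqrt (show 0 ≤ 1 - 4 * a by linarith)
  unfold smallRoot
  linear_combination -this / 4

lemma smallRoot_eq_of_le_half {x : ℝ} (hx : x ≤ 1 / 2) : smallRoot (x * (1 - x)) = x := by
  have : 1 - 4 * (x * (1 - x)) = (1 - 2 * x) ^ 2 := by ring
  rw [smallRoot, this, Real.sqrt_sq (by linarith)]
  ring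

lemma le_smallRoot {a : ℝ} (ha : a ≤ 1 / 4) : a ≤ smallRoot a := by
  nlinarith [smallRoot_mul_one_sub ha, sq_nonneg (smallRoot a)]

lemma continuous_smallRoot : Continuous smallRoot := by
  unfold smallRoot
  fun_prop

lemma concaveOn_smallRoot_mul_mul_one_sub {r : ℝ} (hr0 : 0 ≤ r) (hr1 : r ≤ 1) :
    ConcaveOn ℝ univ fun t => smallRoot (r * (t * (1 - t))) := by
  refine ⟨convex_univ, fun x _ y _ a b ha hb hab => ?_⟩
  have hsqrt := (convexOn_sqrt_add_mul_sq (sub_nonneg.2 hr1) hr0).2 (mem_univ (2 * x - 1))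
    (mem_univ (2 * y - 1)) ha hb hab
  have hsq : ∀ t, 1 - 4 * (r * (t * (1 - t))) = 1 - r + r * (2 * t - 1) ^ 2 := fun t => by ring
  have hlin : a • (2 * x - 1) + b • (2 * y - 1) = 2 * (a • x + b • y) - 1 := by
    simp only [smul_eq_mul]
    linear_combination -hab
  rw [hlin] at hsqrt
  simp only [smallRoot, hsq, smul_eq_mul] at hsqrt ⊢
  linear_combination hsqrt / 2 + hab / 2

lemma GDF_eq_self_iff {n : ℕ} {γ x : Fin n → ℝ} (hγ : ∀ i, 0 < γ i) (hx : ∀ i, x i < 1)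
    (hsum : ∑ i, x i = 1) :
    GDF γ x = x ↔ ∃ c > 0, ∀ i, x i * (1 - x i) = c * γ i := by
  have hp : ∀ i, 0 < ∏ j ∈ Finset.univ.erase i, (1 - x j) :=
    fun i => Finset.prod_pos fun j _ => sub_pos.2 (hx j)
  have hP : 0 < ∏ j, (1 - x j) := Finset.prod_pos fun j _ => sub_pos.2 (hx j)
  have hd : 0 < dDF γ x := by
    obtain ⟨i, -, -⟩ := Finset.exists_ne_zero_of_sum_ne_zero (hsum ▸ one_ne_zero)
    exact Finset.sum_pos (fun k _ => mul_pos (hγ k) (hp k)) ⟨i, Finset.mem_univ i⟩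
  have key : ∀ c i, x i * (1 - x i) = c * γ i ↔
      x i * ∏ j, (1 - x j) = c * (γ i * ∏ j ∈ Finset.univ.erase i, (1 - x j)) := by
    intro c i
    rw [← Finset.prod_erase_mul _ _ (Finset.mem_univ i), ← mul_left_inj' (hp i).ne']
    constructor <;> intro h <;> linear_combination h
  simp only [key, funext_iff, GDF]
  constructor
  · intro hfix
    refine ⟨(∏ j, (1 - x j)) / dDF γ x, div_pos hP hd, fun i => ?_⟩
    rw [← hfix i]
    ring
  · rintro ⟨c, hc0, hc⟩ i
    have hdc : c * dDF γ x = ∏ j, (1 - x j) := by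
      calc c * dDF γ x = ∑ i, x i * ∏ j, (1 - x j) := by
            rw [dDF, Finset.mul_sum]
            exact Finset.sum_congr rfl fun i _ => (hc i).symm
        _ = ∏ j, (1 - x j) := by rw [← Finset.sum_mul, hsum, one_mul]
    rw [div_eq_iff hd.ne']
    refine mul_left_cancel₀ hc0.ne' ?_
    linear_combination -(hc i) - x i * hdc

lemma lt_one_of_mem_simplexDF {n : ℕ} {x : Fin n → ℝ} (hx : x ∈ simplexDF n)
    (hv : ∀ i, x ≠ Pi.single i 1) (i : Fin n) : x i < 1 := by
  by_contra! hi
  have hsplit := Finset.add_sum_erase Finset.univ x (Finset.mem_univ i)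
  rw [hx.2] at hsplit
  have hrest : ∑ j ∈ Finset.univ.erase i, x j = 0 :=
    le_antisymm (by linarith) (Finset.sum_nonneg fun j _ => hx.1 j)
  refine hv i (funext fun j => ?_)
  rcases eq_or_ne j i with rfl | hji
  · rw [Pi.single_eq_same]
    linarith
  · rw [Pi.single_eq_of_ne hji]
    exact (Finset.sum_eq_zero_iff_of_nonneg fun j _ => hx.1 j).1 hrest j
      (Finset.mem_erase.2 ⟨hji, Finset.mem_univ j⟩)

lemma ne_single_one_of_mem_Ioo {n : ℕ} {x : Fin n → ℝ} {j : Fin n} (hj : x j ∈ Ioo 0 1)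
    (i : Fin n) : x ≠ Pi.single i 1 := by
  rintro rfl
  rcases eq_or_ne j i with rfl | hji
  · simp at hj
  · simp [Pi.single_eq_of_ne hji] at hj

lemma add_lt_one_of_mem_simplexDF {n : ℕ} (hn : 3 ≤ n) {x : Fin n → ℝ}
    (hx : x ∈ simplexDF n) (hpos : ∀ i, 0 < x i) {i j : Fin n} (hij : i ≠ j) : x i + x j < 1 := by
  obtain ⟨k, -, hk⟩ :=
    Finset.exists_mem_notMem_of_card_lt_card (s := {i, j}) (t := Finset.univ) (by
      rw [Finset.card_univ, Fintype.card_fin]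
      exact Finset.card_le_two.trans_lt hn)
  calc x i + x j = ∑ l ∈ {i, j}, x l := (Finset.sum_pair hij).symm
    _ < ∑ l, x l := Finset.sum_lt_sum_of_subset (Finset.subset_univ _) (Finset.mem_univ k) hk
        (hpos k) fun l _ _ => (hpos l).le
    _ = 1 := hx.2

lemma le_half_of_mul_one_sub_le {a b : ℝ} (hab : a + b < 1) (h : a * (1 - a) ≤ b * (1 - b)) :
    a ≤ 1 / 2 := by
  nlinarith

lemma div_mem_Icc_of_le {α : Type*} [Field α] [LinearOrder α] [IsStrictOrderedRing α] {a b : α}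
    (ha : 0 ≤ a) (hb : 0 < b) (hab : a ≤ b) : a / b ∈ Icc 0 1 :=
  ⟨div_nonneg ha hb.le, div_le_one_of_le₀ hab hb.le⟩

section Candidate

variable {n : ℕ} {γ : Fin n → ℝ} {m : Fin n}

variable (γ m) in
noncomputable def candidatePoint (t : ℝ) : Fin n → ℝ :=
  Function.update (fun i => smallRoot (γ i / γ m * (t * (1 - t)))) m t

lemma candidatePoint_self (t : ℝ) : candidatePoint γ m t m = t := Function.update_self ..

lemma candidatePoint_of_ne {i : Fin n} (hi : i ≠ m) (t : ℝ) :
    candidatePoint γ m t i = smallRoot (γ i / γ m * (t * (1 - t))) :=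
  Function.update_of_ne hi ..

lemma div_mul_mul_one_sub_le_quarter (hγ : ∀ i, 0 < γ i) (hm : ∀ i, γ i ≤ γ m) (i : Fin n)
    (t : ℝ) : γ i / γ m * (t * (1 - t)) ≤ 1 / 4 := by
  obtain ⟨hr0, hr1⟩ := div_mem_Icc_of_le (hγ i).le (hγ m) (hm i)
  nlinarith [sq_nonneg (2 * t - 1)]

lemma concaveOn_sum_candidatePoint (hγ : ∀ i, 0 < γ i) (hm : ∀ i, γ i ≤ γ m) :
    ConcaveOn ℝ univ fun t => ∑ i, candidatePoint γ m t i := by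
  refine ConcaveOn.sum convex_univ fun i _ => ?_
  rcases eq_or_ne i m with rfl | hi
  · simp only [candidatePoint_self]
    exact concaveOn_id convex_univ
  · obtain ⟨hr0, hr1⟩ := div_mem_Icc_of_le (hγ i).le (hγ m) (hm i)
    simpa only [candidatePoint_of_ne hi] using concaveOn_smallRoot_mul_mul_one_sub hr0 hr1

lemma continuous_sum_candidatePoint : Continuous fun t => ∑ i, candidatePoint γ m t i := by
  unfold candidatePoint
  have := continuous_smallRoot
  fun_prop

lemma sum_candidatePoint_zero : ∑ i, candidatePoint γ m 0 i = 0 := by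
  simp [candidatePoint, smallRoot_zero]

lemma sum_candidatePoint_one : ∑ i, candidatePoint γ m 1 i = 1 := by
  simp [candidatePoint, smallRoot_zero, Finset.sum_update_of_mem]

lemma exists_one_lt_sum_candidatePoint (hγ : ∀ i, 0 < γ i) (hm : ∀ i, γ i ≤ γ m)
    (hγsum : ∑ i, γ i = 1) (hγm : γ m < 1 / 2) :
    ∃ t ∈ Ioo 0 1, 1 < ∑ i, candidatePoint γ m t i := by
  have hγm0 := hγ m
  -- `t + (1 - γ m) / γ m * t (1 - t) - 1 = (1 - t) ((1 - γ m) / γ m * t - 1)` is positive for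
  -- `γ m / (1 - γ m) < t < 1`, and `γ m < 1 / 2` puts `1 / (2 (1 - γ m))` in that range
  set t := 1 / (2 * (1 - γ m)) with ht
  have ht0 : 0 < t := div_pos one_pos (by linarith)
  have ht1 : t < 1 := by rw [ht, div_lt_one (by linarith)]; linarith
  refine ⟨t, ⟨ht0, ht1⟩, ?_⟩
  calc 1 < t + (1 - γ m) / γ m * (t * (1 - t)) := by
        have : (1 - γ m) / γ m * t = 1 / (2 * γ m) := by
          have : 1 - γ m ≠ 0 := by linarith
          rw [ht]; field_simp
        have h2 : 1 < 1 / (2 * γ m) := by rw [lt_div_iff₀ (by positivity)]; linarith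
        nlinarith
    _ = t + ∑ i ∈ Finset.univ.erase m, γ i / γ m * (t * (1 - t)) := by
        rw [← Finset.sum_mul, ← Finset.sum_div, Finset.sum_erase_eq_sub (Finset.mem_univ m),
          hγsum]
    _ ≤ t + ∑ i ∈ Finset.univ.erase m, candidatePoint γ m t i := by
        gcongr with i hi
        rw [candidatePoint_of_ne (Finset.ne_of_mem_erase hi)]
        exact le_smallRoot (div_mul_mul_one_sub_le_quarter hγ hm i t)
    _ = ∑ i, candidatePoint γ m t i := by
        rw [← Finset.add_sum_erase _ _ (Finset.mem_univ m), candidatePoint_self]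

lemma candidatePoint_mem_Ioo (hγ : ∀ i, 0 < γ i) (hm : ∀ i, γ i ≤ γ m) {t : ℝ}
    (ht : t ∈ Ioo 0 1) (i : Fin n) : candidatePoint γ m t i ∈ Ioo 0 1 := by
  rcases eq_or_ne i m with rfl | hi
  · rwa [candidatePoint_self]
  · rw [candidatePoint_of_ne hi]
    have hpos : 0 < γ i / γ m * (t * (1 - t)) :=
      mul_pos (div_pos (hγ i) (hγ m)) (mul_pos ht.1 (sub_pos.2 ht.2))
    exact ⟨hpos.trans_le (le_smallRoot (div_mul_mul_one_sub_le_quarter hγ hm i t)),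
      (smallRoot_le_half _).trans_lt (by norm_num)⟩

lemma candidatePoint_mul_one_sub (hγ : ∀ i, 0 < γ i) (hm : ∀ i, γ i ≤ γ m) (t : ℝ)
    (i : Fin n) :
    candidatePoint γ m t i * (1 - candidatePoint γ m t i) = t * (1 - t) / γ m * γ i := by
  have := (hγ m).ne'
  rcases eq_or_ne i m with rfl | hi
  · rw [candidatePoint_self]
    field_simp
  · rw [candidatePoint_of_ne hi,
      smallRoot_mul_one_sub (div_mul_mul_one_sub_le_quarter hγ hm i t)]
    ring

lemma GDF_candidatePoint (hγ : ∀ i, 0 < γ i) (hm : ∀ i, γ i ≤ γ m) {t : ℝ}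
    (ht : t ∈ Ioo 0 1) (hsum : ∑ i, candidatePoint γ m t i = 1) :
    GDF γ (candidatePoint γ m t) = candidatePoint γ m t :=
  (GDF_eq_self_iff hγ (fun i => (candidatePoint_mem_Ioo hγ hm ht i).2) hsum).2
    ⟨t * (1 - t) / γ m, div_pos (mul_pos ht.1 (sub_pos.2 ht.2)) (hγ m),
      candidatePoint_mul_one_sub hγ hm t⟩

lemma eq_candidatePoint (hn : 3 ≤ n) (hγ : ∀ i, 0 < γ i) (hm : ∀ i, γ i ≤ γ m)
    {y : Fin n → ℝ} (hy : y ∈ simplexDF n) (hyv : ∀ i, y ≠ Pi.single i 1)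
    (hfix : GDF γ y = y) : y m ∈ Ioo 0 1 ∧ y = candidatePoint γ m (y m) := by
  have hy1 := lt_one_of_mem_simplexDF hy hyv
  obtain ⟨c, hc, hyc⟩ := (GDF_eq_self_iff hγ hy1 hy.2).1 hfix
  have hpos : ∀ i, 0 < y i := fun i =>
    (pos_iff_pos_of_mul_pos (hyc i ▸ mul_pos hc (hγ i))).2 (sub_pos.2 (hy1 i))
  refine ⟨⟨hpos m, hy1 m⟩, funext fun i => ?_⟩
  rcases eq_or_ne i m with rfl | hi
  · rw [candidatePoint_self]
  · have hhalf : y i ≤ 1 / 2 :=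
      le_half_of_mul_one_sub_le (add_lt_one_of_mem_simplexDF hn hy hpos hi) (by
        rw [hyc, hyc]
        exact mul_le_mul_of_nonneg_left (hm i) hc.le)
    have := (hγ m).ne'
    rw [candidatePoint_of_ne hi, hyc m, ← smallRoot_eq_of_le_half hhalf, hyc i]
    congr 1
    field_simp

end Candidate

/-- **uniqueness part of the paper's Theorem 4.** Suppose in addition that
`γᵢ < 1/2` for every `i`. Then `G` has exactly one fixed point in `Δₙ` that is not a
vertex: there is a unique `x̄ ∈ Δₙ` with `x̄ ∉ {e₁, …, eₙ}` and `G(x̄) = x̄`. -/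
theorem GDF_unique_nonvertex_fixed_point
    {n : ℕ} (hn : 3 ≤ n) (γ : Fin n → ℝ)
    (hγpos : ∀ i, 0 < γ i) (hγsum : ∑ i, γ i = 1)
    (hγhalf : ∀ i, γ i < 1 / 2) :
    ∃! x : Fin n → ℝ,
      x ∈ simplexDF n ∧ (∀ i : Fin n, x ≠ Pi.single i 1) ∧ GDF γ x = x := by
  obtain ⟨m, -, hm⟩ :=
    Finset.exists_max_image Finset.univ γ ⟨⟨0, by omega⟩, Finset.mem_univ _⟩
  replace hm : ∀ i, γ i ≤ γ m := fun i => hm i (Finset.mem_univ i)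
  obtain ⟨c, hc, hc_gt⟩ := exists_one_lt_sum_candidatePoint hγpos hm hγsum (hγhalf m)
  have hconcave :=
    (concaveOn_sum_candidatePoint hγpos hm).subset (subset_univ _) (convex_Icc 0 1)
  obtain ⟨t, ⟨ht, hsum⟩, ht_unique⟩ := hconcave.existsUnique_mem_Ioo_eq
    continuous_sum_candidatePoint.continuousOn (by rw [sum_candidatePoint_zero]; exact one_pos)
    sum_candidatePoint_one hc hc_gt
  refine ⟨candidatePoint γ m t, ⟨⟨fun i => (candidatePoint_mem_Ioo hγpos hm ht i).1.le, hsum⟩,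
    ne_single_one_of_mem_Ioo (candidatePoint_mem_Ioo hγpos hm ht m),
    GDF_candidatePoint hγpos hm ht hsum⟩, fun y ⟨hy, hyv, hfix⟩ => ?_⟩
  obtain ⟨hym, hy_eq⟩ := eq_candidatePoint hn hγpos hm hy hyv hfix
  rw [hy_eq, ht_unique (y m) ⟨hym, hy_eq ▸ hy.2⟩]
end

section
/- For every x ∈ ℝⁿ with x_j < 1 for all j, the Jacobian matrix J(x) of G at x (with entries J_{ii} = G_i(x)(1 − G_i(x))/(1 − x_i) and J_{ij} = −G_i(x)G_j(x)/(1 − x_j) for j ≠ i) has all complex eigenvalues real and nonnegative, and the eigenvalue 0 has algebraic multiplicity exactly one, all other eigenvalues being strictly positive. -/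
/-!
The Jacobian factors as `J = M W` with `M = diag g - g gᵀ` (`g = G(x)`) and
`W = diag (1 / (1 - xⱼ))` positive diagonal, so it has the characteristic polynomial of the
symmetric matrix `W^{1/2} M W^{1/2}`. Because `∑ gᵢ = 1`, the quadratic form of `M` is the
variance `∑ gᵢ (vᵢ - ⟨g, v⟩)²`: `M` is positive semidefinite with kernel the constant vectors,
so its rank is `n - 1`, which is the number of nonzero eigenvalues of the symmetric matrix.
-/

open Matrix Polynomial Finset

namespace Matrix

section Spectrum

variable {n : Type*} [Fintype n] [DecidableEq n]

lemma IsHermitian.roots_charpoly_map_complex {A : Matrix n n ℝ} (hA : A.IsHermitian) :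
    (A.map (algebraMap ℝ ℂ)).charpoly.roots = univ.val.map fun i => (hA.eigenvalues i : ℂ) := by
  rw [charpoly_map, hA.charpoly_eq, Polynomial.map_prod, Polynomial.roots_prod]
  · simp
  · simp [Finset.prod_ne_zero_iff, Polynomial.X_sub_C_ne_zero]

lemma PosSemidef.exists_nonneg_eq_of_isRoot_charpoly_map {A : Matrix n n ℝ} (hA : A.PosSemidef)
    {μ : ℂ} (hμ : (A.map (algebraMap ℝ ℂ)).charpoly.IsRoot μ) : ∃ t : ℝ, 0 ≤ t ∧ μ = t := by
  rw [← mem_roots (charpoly_monic _).ne_zero, hA.isHermitian.roots_charpoly_map_complex] at hμ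
  obtain ⟨i, -, rfl⟩ := Multiset.mem_map.mp hμ
  exact ⟨_, hA.eigenvalues_nonneg i, rfl⟩

lemma IsHermitian.rootMultiplicity_zero_charpoly_map {A : Matrix n n ℝ} (hA : A.IsHermitian) :
    (A.map (algebraMap ℝ ℂ)).charpoly.rootMultiplicity 0 = Fintype.card n - A.rank := by
  rw [← count_roots, hA.roots_charpoly_map_complex, Multiset.count_map,
    hA.rank_eq_card_non_zero_eigs, Fintype.card_subtype_compl,
    Nat.sub_sub_self (Fintype.card_subtype_le _), Fintype.card_subtype, Finset.card_def,
    Finset.filter_val]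
  congr 1
  exact Multiset.filter_congr fun i _ => by rw [eq_comm, Complex.ofReal_eq_zero]

end Spectrum

section DiagonalScaling

variable {n : Type*} [Fintype n] [DecidableEq n]

lemma charpoly_mul_diagonal_sq {R : Type*} [CommRing R] (M : Matrix n n R) (w : n → R) :
    (M * diagonal fun j => w j ^ 2).charpoly = (diagonal w * M * diagonal w).charpoly := by
  simp_rw [sq, ← diagonal_mul_diagonal, ← mul_assoc]
  rw [charpoly_mul_comm, ← mul_assoc]

lemma PosSemidef.diagonal_mul_mul_diagonal {A : Matrix n n ℝ} (hA : A.PosSemidef) (w : n → ℝ) :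
    (diagonal w * A * diagonal w).PosSemidef := by
  simpa using hA.mul_mul_conjTranspose_same (diagonal w)

lemma rank_diagonal_mul_mul_diagonal {w : n → ℝ} (hw : ∀ i, w i ≠ 0) (A : Matrix n n ℝ) :
    (diagonal w * A * diagonal w).rank = A.rank := by
  have hdet : IsUnit (diagonal w).det := by
    simpa [det_diagonal, Finset.prod_ne_zero_iff] using fun i => hw i
  rw [rank_mul_eq_left_of_isUnit_det _ _ hdet, rank_mul_eq_right_of_isUnit_det _ _ hdet]

end DiagonalScaling

section CategoricalCov

variable {n : Type*} [DecidableEq n]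

/-- The covariance matrix of the one-hot vector of a categorical distribution with
probabilities `g`. -/
def categoricalCov (g : n → ℝ) : Matrix n n ℝ := diagonal g - vecMulVec g g

variable {g : n → ℝ}

lemma isHermitian_categoricalCov : (categoricalCov g).IsHermitian := by
  simp [categoricalCov, IsHermitian]

lemma eq_categoricalCov_mul_diagonal [Fintype n] {t : n → ℝ} {J : Matrix n n ℝ}
    (hJ : ∀ i j, J i j = if i = j then g i * (1 - g i) / t i else -(g i * g j / t j)) :
    J = categoricalCov g * diagonal fun j => (t j)⁻¹ := by
  ext i j
  rw [hJ, mul_diagonal]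
  split_ifs with h
  · subst h
    simp [categoricalCov, vecMulVec_apply, div_eq_mul_inv, mul_sub]
  · simp [categoricalCov, vecMulVec_apply, h, div_eq_mul_inv]

variable [Fintype n]

lemma categoricalCov_mulVec (v : n → ℝ) :
    categoricalCov g *ᵥ v = fun i => g i * (v i - g ⬝ᵥ v) := by
  ext i
  simp [categoricalCov, sub_mulVec, vecMulVec_mulVec, mulVec_diagonal, mul_sub, mul_comm]

lemma dotProduct_categoricalCov_mulVec (hg : ∑ i, g i = 1) (v : n → ℝ) :
    v ⬝ᵥ categoricalCov g *ᵥ v = ∑ i, g i * (v i - g ⬝ᵥ v) ^ 2 := by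
  have hmean : ∑ i, g i * (v i - g ⬝ᵥ v) = 0 := by
    simp [mul_sub, Finset.sum_sub_distrib, ← Finset.sum_mul, hg, dotProduct]
  calc v ⬝ᵥ categoricalCov g *ᵥ v = ∑ i, v i * (g i * (v i - g ⬝ᵥ v)) := by
        rw [categoricalCov_mulVec, dotProduct]
    _ = ∑ i, (g i * (v i - g ⬝ᵥ v) ^ 2 + g ⬝ᵥ v * (g i * (v i - g ⬝ᵥ v))) :=
        Finset.sum_congr rfl fun i _ => by ring
    _ = ∑ i, g i * (v i - g ⬝ᵥ v) ^ 2 := by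
        rw [Finset.sum_add_distrib, ← Finset.mul_sum, hmean, mul_zero, add_zero]

lemma posSemidef_categoricalCov (hg₀ : ∀ i, 0 ≤ g i) (hg : ∑ i, g i = 1) :
    (categoricalCov g).PosSemidef := by
  refine .of_dotProduct_mulVec_nonneg isHermitian_categoricalCov fun v => ?_
  rw [star_trivial, dotProduct_categoricalCov_mulVec hg]
  exact Finset.sum_nonneg fun i _ => mul_nonneg (hg₀ i) (sq_nonneg _)

lemma categoricalCov_mulVec_eq_zero_iff (hg₀ : ∀ i, g i ≠ 0) (hg : ∑ i, g i = 1)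
    {v : n → ℝ} : categoricalCov g *ᵥ v = 0 ↔ ∃ c, v = Function.const n c := by
  rw [categoricalCov_mulVec]
  constructor
  · intro h
    refine ⟨g ⬝ᵥ v, funext fun i => ?_⟩
    simpa [hg₀ i, sub_eq_zero] using congrFun h i
  · rintro ⟨c, rfl⟩
    ext i
    simp [dotProduct, ← Finset.sum_mul, hg]

lemma rank_categoricalCov (hg₀ : ∀ i, g i ≠ 0) (hg : ∑ i, g i = 1) :
    (categoricalCov g).rank = Fintype.card n - 1 := by
  have hker : LinearMap.ker (categoricalCov g).mulVecLin = ℝ ∙ Function.const n 1 := by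
    ext v
    simp [categoricalCov_mulVec_eq_zero_iff hg₀ hg, Submodule.mem_span_singleton, eq_comm,
      funext_iff]
  have hne : Nonempty n := by
    by_contra h
    rw [not_nonempty_iff] at h
    simp at hg
  have hrk := LinearMap.finrank_range_add_finrank_ker (categoricalCov g).mulVecLin
  rw [hker, finrank_span_singleton (by simp), Module.finrank_fintype_fun_eq_card] at hrk
  rw [rank, ← hrk, Nat.add_sub_cancel]

end CategoricalCov

end Matrix

section DeGrootFriedkin

variable {n : ℕ} {γ x : Fin n → ℝ}

lemma prod_erase_one_sub_pos (hx : ∀ j, x j < 1) (k : Fin n) :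
    0 < ∏ j ∈ univ.erase k, (1 - x j) :=
  Finset.prod_pos fun j _ => sub_pos.2 (hx j)

lemma dDF_pos (hn : 0 < n) (hγ : ∀ i, 0 < γ i) (hx : ∀ j, x j < 1) : 0 < dDF γ x :=
  haveI : Nonempty (Fin n) := Fin.pos_iff_nonempty.mp hn
  Finset.sum_pos (fun k _ => mul_pos (hγ k) (prod_erase_one_sub_pos hx k)) univ_nonempty

lemma GDF_pos (hn : 0 < n) (hγ : ∀ i, 0 < γ i) (hx : ∀ j, x j < 1) (i : Fin n) :
    0 < GDF γ x i :=
  div_pos (mul_pos (hγ i) (prod_erase_one_sub_pos hx i)) (dDF_pos hn hγ hx)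

lemma sum_GDF (hd : dDF γ x ≠ 0) : ∑ i, GDF γ x i = 1 := by
  unfold GDF
  rw [← Finset.sum_div]
  exact div_self hd

end DeGrootFriedkin

theorem GDF_jacobian_eigenvalues_everywhere_general
    {n : ℕ} (hn : 3 ≤ n) (γ : Fin n → ℝ)
    (hγpos : ∀ i, 0 < γ i)
    (x : Fin n → ℝ) (hx : ∀ j, x j < 1)
    (J : Matrix (Fin n) (Fin n) ℝ)
    (hJ : ∀ i j, J i j =
      if i = j then GDF γ x i * (1 - GDF γ x i) / (1 - x i)
      else -(GDF γ x i * GDF γ x j / (1 - x j))) :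
    (∀ μ : ℂ, (Matrix.charpoly (J.map (algebraMap ℝ ℂ))).IsRoot μ →
      μ.im = 0 ∧ 0 ≤ μ.re) ∧
    (Matrix.charpoly (J.map (algebraMap ℝ ℂ))).rootMultiplicity 0 = 1 ∧
    (∀ μ : ℂ, (Matrix.charpoly (J.map (algebraMap ℝ ℂ))).IsRoot μ → μ ≠ 0 →
      μ.im = 0 ∧ 0 < μ.re) := by
  have hn₀ : 0 < n := by omega
  have hg := GDF_pos hn₀ hγpos hx
  have hgs := sum_GDF (dDF_pos hn₀ hγpos hx).ne'
  set w : Fin n → ℝ := fun j => √(1 - x j)⁻¹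
  have hw : ∀ j, w j ≠ 0 := fun j => Real.sqrt_ne_zero'.2 (inv_pos.2 (sub_pos.2 (hx j)))
  have hw_sq : (fun j => (1 - x j)⁻¹) = fun j => w j ^ 2 :=
    funext fun j => (Real.sq_sqrt (inv_nonneg.2 (sub_nonneg.2 (hx j).le))).symm
  set S := diagonal w * categoricalCov (GDF γ x) * diagonal w
  have hS : S.PosSemidef :=
    (posSemidef_categoricalCov (fun i => (hg i).le) hgs).diagonal_mul_mul_diagonal w
  have hrank : S.rank = n - 1 := by
    rw [rank_diagonal_mul_mul_diagonal hw, rank_categoricalCov (fun i => (hg i).ne') hgs,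
      Fintype.card_fin]
  have hcharpoly : (J.map (algebraMap ℝ ℂ)).charpoly = (S.map (algebraMap ℝ ℂ)).charpoly := by
    rw [charpoly_map, charpoly_map, eq_categoricalCov_mul_diagonal hJ, hw_sq,
      charpoly_mul_diagonal_sq]
  rw [hcharpoly]
  refine ⟨fun μ hμ => ?_, ?_, fun μ hμ hμ₀ => ?_⟩
  · obtain ⟨t, ht, rfl⟩ := hS.exists_nonneg_eq_of_isRoot_charpoly_map hμ
    simpa using ht
  · rw [hS.isHermitian.rootMultiplicity_zero_charpoly_map, hrank, Fintype.card_fin]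
    omega
  · obtain ⟨t, ht, rfl⟩ := hS.exists_nonneg_eq_of_isRoot_charpoly_map hμ
    have ht₀ : t ≠ 0 := by simpa using hμ₀
    simpa using ht.lt_of_ne' ht₀

/-- For every `x ∈ ℝⁿ` with `xⱼ < 1` for all `j`, the Jacobian matrix
`J(x)` of `G` at `x` (with `Jᵢᵢ = Gᵢ(x)(1 − Gᵢ(x))/(1 − xᵢ)` and
`Jᵢⱼ = −Gᵢ(x)Gⱼ(x)/(1 − xⱼ)` for `j ≠ i`) has all complex eigenvalues real and
nonnegative, and the eigenvalue `0` has algebraic multiplicity exactly one, all other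
eigenvalues being strictly positive. -/
theorem GDF_jacobian_eigenvalues_everywhere
    {n : ℕ} (hn : 3 ≤ n) (γ : Fin n → ℝ)
    (hγpos : ∀ i, 0 < γ i) (hγsum : ∑ i, γ i = 1)
    (x : Fin n → ℝ) (hx : ∀ j, x j < 1)
    (J : Matrix (Fin n) (Fin n) ℝ)
    (hJ : ∀ i j, J i j =
      if i = j then GDF γ x i * (1 - GDF γ x i) / (1 - x i)
      else -(GDF γ x i * GDF γ x j / (1 - x j))) :
    (∀ μ : ℂ, (Matrix.charpoly (J.map (algebraMap ℝ ℂ))).IsRoot μ →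
      μ.im = 0 ∧ 0 ≤ μ.re) ∧
    (Matrix.charpoly (J.map (algebraMap ℝ ℂ))).rootMultiplicity 0 = 1 ∧
    (∀ μ : ℂ, (Matrix.charpoly (J.map (algebraMap ℝ ℂ))).IsRoot μ → μ ≠ 0 →
      μ.im = 0 ∧ 0 < μ.re) :=
  GDF_jacobian_eigenvalues_everywhere_general hn γ hγpos x hx J hJ
end
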